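/- The cross-product and curl forms of the metric terms coincide: let x = (x₁, x₂, x₃) : ℝ³ → ℝ³ be twice continuously differentiable in the variables (ξ¹, ξ², ξ³). Then for every cyclic permutation (i, j, k) of (1, 2, 3) and every cyclic permutation (n, m, l) of (1, 2, 3), the n-th component of (∂x/∂ξ^j) × (∂x/∂ξ^k) equals minus the i-th component of curl(x_l · grad x_m), i.e. ((∂x/∂ξ^j) × (∂x/∂ξ^k))ₙ = −ê_i · curl(x_l grad x_m). -/

import Mathlib

/-- Partial derivative of `f : ℝ³ → ℝ` in direction `d`. -/
noncomputable def pd3 (d : Fin 3) (f : (Fin 3 → ℝ) → ℝ) (y : Fin 3 → ℝ) : ℝ :=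
  deriv (fun s => f (Function.update y d s)) (y d)

/-- Gradient of `f : ℝ³ → ℝ`: `grad f = (∂₁f, ∂₂f, ∂₃f)`. -/
noncomputable def grad3 (f : (Fin 3 → ℝ) → ℝ) (y : Fin 3 → ℝ) : Fin 3 → ℝ :=
  fun d => pd3 d f y

/-- Curl of a vector field `F : ℝ³ → ℝ³`:
`curl F = (∂₂F₃ - ∂₃F₂, ∂₃F₁ - ∂₁F₃, ∂₁F₂ - ∂₂F₁)`. -/
noncomputable def curl3 (F : (Fin 3 → ℝ) → (Fin 3 → ℝ)) (y : Fin 3 → ℝ) : Fin 3 → ℝ :=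
  ![pd3 1 (fun z => F z 2) y - pd3 2 (fun z => F z 1) y,
    pd3 2 (fun z => F z 0) y - pd3 0 (fun z => F z 2) y,
    pd3 0 (fun z => F z 1) y - pd3 1 (fun z => F z 0) y]

/-- `(i, j, k)` is a cyclic permutation of `(1, 2, 3)` (indices in `Fin 3`). -/
def Cyclic3 (i j k : Fin 3) : Prop := j = i + 1 ∧ k = i + 2

/-!
Since `x_l grad x_m` is a product, the Leibniz rule gives
`curl (f grad g) = grad f × grad g + f curl (grad g)`, and `curl (grad g) = 0` by the symmetry of
second derivatives of a `C²` function. Hence `-curl (x_l grad x_m) = grad x_m × grad x_l`, whose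
`i`-th component, written out for the cyclic indices, is the `n`-th component of
`∂x/∂ξʲ × ∂x/∂ξᵏ`.
-/

lemma pd3_eq_fderiv {f : (Fin 3 → ℝ) → ℝ} {y : Fin 3 → ℝ} (hf : DifferentiableAt ℝ f y)
    (d : Fin 3) : pd3 d f y = fderiv ℝ f y (Pi.single d 1) := by
  have hf' : HasFDerivAt f (fderiv ℝ f y) (Function.update y d (y d)) := by
    rw [Function.update_eq_self]
    exact hf.hasFDerivAt
  exact (hf'.comp_hasDerivAt (y d) (hasDerivAt_update y d (y d))).deriv

lemma pd3_mul {f g : (Fin 3 → ℝ) → ℝ} {y : Fin 3 → ℝ} (hf : DifferentiableAt ℝ f y)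
    (hg : DifferentiableAt ℝ g y) (d : Fin 3) :
    pd3 d (fun z => f z * g z) y = pd3 d f y * g y + f y * pd3 d g y := by
  rw [pd3_eq_fderiv (hf.fun_mul hg), pd3_eq_fderiv hf, pd3_eq_fderiv hg, fderiv_fun_mul hf hg]
  simp only [add_apply, smul_apply, smul_eq_mul]
  ring

section SecondDerivatives

variable {g : (Fin 3 → ℝ) → ℝ}

lemma pd3_eq_fderiv_apply (hg : ContDiff ℝ 2 g) (d : Fin 3) :
    (fun z => pd3 d g z) = fun z => fderiv ℝ g z (Pi.single d 1) :=
  funext fun z => pd3_eq_fderiv (hg.differentiable two_ne_zero z) d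

lemma differentiable_fderiv_of_contDiff_two (hg : ContDiff ℝ 2 g) :
    Differentiable ℝ (fderiv ℝ g) :=
  (hg.fderiv_right le_rfl).differentiable one_ne_zero

lemma differentiable_pd3 (hg : ContDiff ℝ 2 g) (d : Fin 3) :
    Differentiable ℝ (fun z => pd3 d g z) := by
  rw [pd3_eq_fderiv_apply hg d]
  exact (differentiable_fderiv_of_contDiff_two hg).clm_apply (differentiable_const _)

lemma pd3_pd3 (hg : ContDiff ℝ 2 g) (a b : Fin 3) (y : Fin 3 → ℝ) :
    pd3 a (fun z => pd3 b g z) y = fderiv ℝ (fderiv ℝ g) y (Pi.single a 1) (Pi.single b 1) := by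
  have hF := differentiable_fderiv_of_contDiff_two hg y
  rw [pd3_eq_fderiv (differentiable_pd3 hg b y), pd3_eq_fderiv_apply hg b,
    fderiv_clm_apply hF (differentiableAt_const _)]
  simp

lemma pd3_pd3_comm (hg : ContDiff ℝ 2 g) (a b : Fin 3) (y : Fin 3 → ℝ) :
    pd3 a (fun z => pd3 b g z) y = pd3 b (fun z => pd3 a g z) y := by
  rw [pd3_pd3 hg, pd3_pd3 hg]
  exact (hg.contDiffAt.isSymmSndFDerivAt (by simp)) _ _

end SecondDerivatives

lemma curl3_apply_cyclic (F : (Fin 3 → ℝ) → (Fin 3 → ℝ)) (y : Fin 3 → ℝ) (i : Fin 3) :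
    curl3 F y i = pd3 (i + 1) (fun z => F z (i + 2)) y - pd3 (i + 2) (fun z => F z (i + 1)) y := by
  fin_cases i <;> rfl

lemma cross_apply_cyclic {R : Type*} [CommRing R] (u v : Fin 3 → R) (n : Fin 3) :
    crossProduct u v n = u (n + 1) * v (n + 2) - u (n + 2) * v (n + 1) := by
  fin_cases n <;> rfl

lemma curl3_smul_grad3 {f g : (Fin 3 → ℝ) → ℝ} {y : Fin 3 → ℝ} (hf : DifferentiableAt ℝ f y)
    (hg : ContDiff ℝ 2 g) :
    curl3 (fun z => f z • grad3 g z) y = crossProduct (grad3 f y) (grad3 g y) := by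
  funext i
  simp only [curl3_apply_cyclic, cross_apply_cyclic, grad3, Pi.smul_apply, smul_eq_mul]
  rw [pd3_mul hf (differentiable_pd3 hg _ y), pd3_mul hf (differentiable_pd3 hg _ y),
    pd3_pd3_comm hg (i + 1) (i + 2)]
  ring

/-- The cross-product and curl forms of the metric terms coincide: if
`x = (x₁,x₂,x₃) : ℝ³ → ℝ³` is twice continuously differentiable, then for all cyclic
permutations `(i,j,k)` and `(n,m,l)` of `(1,2,3)`,
`((∂x/∂ξʲ) × (∂x/∂ξᵏ))ₙ = -êᵢ ⋅ curl (x_l grad x_m)`. -/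
theorem metric_terms_cross_eq_curl_form
    (x : (Fin 3 → ℝ) → (Fin 3 → ℝ)) (hx : ∀ n : Fin 3, ContDiff ℝ 2 (fun y => x y n)) :
    ∀ i j k n m l : Fin 3, Cyclic3 i j k → Cyclic3 n m l →
      ∀ y : Fin 3 → ℝ,
        crossProduct (fun a => pd3 j (fun z => x z a) y) (fun a => pd3 k (fun z => x z a) y) n
          = -(curl3 (fun z => x z l • grad3 (fun w => x w m) z) y i) := by
  rintro i j k n m l ⟨rfl, rfl⟩ ⟨rfl, rfl⟩ y
  rw [curl3_smul_grad3 ((hx _).differentiable two_ne_zero y) (hx _), ← Pi.neg_apply,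
    cross_anticomm, cross_apply_cyclic, cross_apply_cyclic]
  simp only [grad3]
  ring
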